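/- arXiv:2304.02207 — 3 statements merged into one kernel-verified Lean document; each statement's English description precedes it below -/
import Mathlib

section
/- Let M, P, V be n×n matrices with entries in {0,1}. Define real matrices Q̃ = M, K̃ with K̃^T = P, Ṽ = V. If ((exp_entrywise(Q̃ K̃^T) − 1_{n×n}) Ṽ)_{j,i} = 0 for some i, j ∈ [n], then the boolean matrix product satisfies (M P V)_{j,i} = 0. -/
/-! All matrices involved have nonnegative entries, so an entry of a product is positive as soon
as one of its summands is. A witness `M j l = P l k = 1` makes `(M P) j k` positive, hence
`exp ((M P) j k) - 1` positive, and with `V k i = 1` the entry `((exp (M P) - 1) V) j i` is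
positive, not zero. -/

open scoped Classical

/-- Entrywise exponential of a matrix. -/
noncomputable def expEntry {m k : Type*} (M : Matrix m k ℝ) : Matrix m k ℝ :=
  Matrix.of fun a b => Real.exp (M a b)

/-- The all-ones matrix. -/
def onesMat (m k : Type*) : Matrix m k ℝ := Matrix.of fun _ _ => (1 : ℝ)

/-- Boolean-semiring triple product entry for 0/1 matrices. -/
noncomputable def boolProd3 {n : ℕ} (M P V : Matrix (Fin n) (Fin n) ℝ)
    (j i : Fin n) : ℝ :=
  if ∃ l k, M j l = 1 ∧ P l k = 1 ∧ V k i = 1 then 1 else 0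

namespace Matrix

variable {l m o R : Type*} [Fintype m] [Semiring R] [PartialOrder R]

theorem mul_apply_nonneg [IsOrderedRing R] {A : Matrix l m R} {B : Matrix m o R}
    (hA : ∀ a b, 0 ≤ A a b) (hB : ∀ a b, 0 ≤ B a b) (a : l) (c : o) :
    0 ≤ (A * B) a c :=
  Finset.sum_nonneg fun b _ => mul_nonneg (hA a b) (hB b c)

theorem mul_apply_pos [IsStrictOrderedRing R] {A : Matrix l m R} {B : Matrix m o R}
    (hA : ∀ a b, 0 ≤ A a b) (hB : ∀ a b, 0 ≤ B a b) {a : l} {b : m} {c : o}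
    (hAab : 0 < A a b) (hBbc : 0 < B b c) : 0 < (A * B) a c :=
  Finset.sum_pos' (fun b _ => mul_nonneg (hA a b) (hB b c))
    ⟨b, Finset.mem_univ b, mul_pos hAab hBbc⟩

end Matrix

section ExpEntry

variable {m k : Type*} {A : Matrix m k ℝ}

theorem expEntry_sub_onesMat_apply (a : m) (b : k) :
    (expEntry A - onesMat m k) a b = Real.exp (A a b) - 1 :=
  rfl

theorem expEntry_sub_onesMat_nonneg (hA : ∀ a b, 0 ≤ A a b) (a : m) (b : k) :
    0 ≤ (expEntry A - onesMat m k) a b := by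
  rw [expEntry_sub_onesMat_apply, sub_nonneg]
  exact Real.one_le_exp (hA a b)

theorem expEntry_sub_onesMat_pos {a : m} {b : k} (hab : 0 < A a b) :
    0 < (expEntry A - onesMat m k) a b := by
  rw [expEntry_sub_onesMat_apply, sub_pos]
  exact Real.one_lt_exp_iff.mpr hab

end ExpEntry

theorem nonneg_of_eq_zero_or_eq_one {R : Type*} [Zero R] [One R] [Preorder R] [ZeroLEOneClass R]
    {x : R} (hx : x = 0 ∨ x = 1) : 0 ≤ x :=
  hx.elim (·.ge) (·.symm ▸ zero_le_one)

theorem zero_entry_implies_boolProd_zero (n : ℕ)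
    (M P V : Matrix (Fin n) (Fin n) ℝ)
    (hM : ∀ a b, M a b = 0 ∨ M a b = 1)
    (hP : ∀ a b, P a b = 0 ∨ P a b = 1)
    (hV : ∀ a b, V a b = 0 ∨ V a b = 1)
    (Q K : Matrix (Fin n) (Fin n) ℝ)
    (hQ : Q = M) (hK : Matrix.transpose K = P)
    (i j : Fin n)
    (hzero : ((expEntry (Q * Matrix.transpose K) - onesMat (Fin n) (Fin n)) * V) j i = 0) :
    boolProd3 M P V j i = 0 := by
  subst hQ hK
  have hM₀ a b := nonneg_of_eq_zero_or_eq_one (hM a b)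
  have hP₀ a b := nonneg_of_eq_zero_or_eq_one (hP a b)
  have hV₀ a b := nonneg_of_eq_zero_or_eq_one (hV a b)
  rw [boolProd3, if_neg]
  rintro ⟨l, k, hMjl, hPlk, hVki⟩
  have hMPjk : 0 < (Q * Matrix.transpose K) j k :=
    Matrix.mul_apply_pos hM₀ hP₀ (hMjl ▸ one_pos) (hPlk ▸ one_pos)
  have hpos : 0 < ((expEntry (Q * Matrix.transpose K) - onesMat (Fin n) (Fin n)) * V) j i :=
    Matrix.mul_apply_pos (expEntry_sub_onesMat_nonneg (Matrix.mul_apply_nonneg hM₀ hP₀))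
      hV₀ (expEntry_sub_onesMat_pos hMPjk) (hVki ▸ one_pos)
  exact hpos.ne' hzero
end

section
/- Let M, P, V ∈ {0,1}^{n×n} with P diagonal. Define 𝖬 = [M M̄] (M̄ the entrywise complement of M), 𝖵 = [V; 0_{n×n}] ∈ {0,1}^{2n×n}, Q̃ = [𝖬; 0_{n×2n}] ∈ R^{2n×2n}, K̃^T = block diag(P,P), Ṽ = [𝖵 0_{2n×n}]. If for i, j ∈ [n] we have ((exp_entrywise(Q̃ K̃^T) − 1_{2n×2n}) Ṽ)_{j,i} > 0, then the boolean semiring product (𝖬 𝖯 𝖵)_{j,i} = 1, where 𝖯 = block diag(P,P). -/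
open scoped Classical

/-!
Since every entry of `𝖬`, `𝖯`, `𝖵` lies in `{0,1}`, the real entry
`∑ₖ (exp((𝖬𝖯)_{j,k}) - 1) 𝖵_{k,i}` can only be positive through a term with `𝖵_{k,i} = 1` and
`(𝖬𝖯)_{j,k} > 0`, and the latter in turn needs a term `𝖬_{j,l} 𝖯_{l,k} > 0`, i.e. a witness
`𝖬_{j,l} = 𝖯_{l,k} = 𝖵_{k,i} = 1` of the boolean product.
-/

namespace Matrix

variable {R : Type*} {l m n o : Type*}

def IsZeroOne [Zero R] [One R] (A : Matrix m n R) : Prop :=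
  ∀ a b, A a b = 0 ∨ A a b = 1

section ZeroOne

variable [Zero R] [One R]

theorem isZeroOne_zero : IsZeroOne (0 : Matrix m n R) :=
  fun _ _ => Or.inl rfl

theorem IsZeroOne.fromRows {A₁ : Matrix m n R} {A₂ : Matrix o n R}
    (h₁ : A₁.IsZeroOne) (h₂ : A₂.IsZeroOne) : (fromRows A₁ A₂).IsZeroOne := by
  rintro (a | a) b
  exacts [h₁ a b, h₂ a b]

theorem IsZeroOne.fromCols {A₁ : Matrix m n R} {A₂ : Matrix m o R}
    (h₁ : A₁.IsZeroOne) (h₂ : A₂.IsZeroOne) : (fromCols A₁ A₂).IsZeroOne := by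
  rintro a (b | b)
  exacts [h₁ a b, h₂ a b]

theorem IsZeroOne.fromBlocks {A : Matrix n l R} {B : Matrix n m R} {C : Matrix o l R}
    {D : Matrix o m R} (hA : A.IsZeroOne) (hB : B.IsZeroOne) (hC : C.IsZeroOne)
    (hD : D.IsZeroOne) : (Matrix.fromBlocks A B C D).IsZeroOne := by
  rintro (a | a) (b | b)
  exacts [hA a b, hB a b, hC a b, hD a b]

end ZeroOne

theorem IsZeroOne.one_sub [Ring R] {A : Matrix m n R} (h : A.IsZeroOne) :
    (of fun a b => 1 - A a b).IsZeroOne := by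
  intro a b
  rcases h a b with h | h <;> simp [h]

end Matrix

theorem Finset.exists_pos_and_eq_one_of_sum_mul_pos {ι R : Type*} [Fintype ι] [Semiring R]
    [LinearOrder R] [IsOrderedRing R] {x v : ι → R} (hv : ∀ k, v k = 0 ∨ v k = 1)
    (h : 0 < ∑ k, x k * v k) : ∃ k, 0 < x k ∧ v k = 1 := by
  obtain ⟨k, -, hk⟩ := Finset.exists_lt_of_sum_lt (f := fun _ => (0 : R)) (by simpa using h)
  rcases hv k with hvk | hvk
  · simp [hvk] at hk
  · exact ⟨k, by simpa [hvk] using hk, hvk⟩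

theorem expEntry_sub_onesMat_mul_fromCols_zero_apply {m n o : Type*} [Fintype n]
    (A : Matrix m n ℝ) (B : Matrix n o ℝ) (r : m) (i : o) :
    ((expEntry A - onesMat m n) * Matrix.fromCols B (0 : Matrix n o ℝ)) r (Sum.inl i) =
      ∑ k, (Real.exp (A r k) - 1) * B k i := by
  simp [Matrix.mul_apply, expEntry, onesMat]

theorem block_positive_entry_implies_boolProd_one_general (n : ℕ)
    (M P V : Matrix (Fin n) (Fin n) ℝ)
    (hM : ∀ a b, M a b = 0 ∨ M a b = 1)
    (hP01 : ∀ a b, P a b = 0 ∨ P a b = 1)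
    (hV : ∀ a b, V a b = 0 ∨ V a b = 1) :
    -- 𝖬 = [M M̄], 𝖵 = [V; 0], Q̃ = [𝖬; 0], K̃ᵀ = 𝖯 = diag(P,P), Ṽ = [𝖵 0]
    let Mbig : Matrix (Fin n) (Fin n ⊕ Fin n) ℝ :=
      Matrix.fromCols M (Matrix.of fun a b => 1 - M a b)
    let Vbig : Matrix (Fin n ⊕ Fin n) (Fin n) ℝ := Matrix.fromRows V 0
    let Qbig : Matrix (Fin n ⊕ Fin n) (Fin n ⊕ Fin n) ℝ := Matrix.fromRows Mbig 0
    let Pbig : Matrix (Fin n ⊕ Fin n) (Fin n ⊕ Fin n) ℝ := Matrix.fromBlocks P 0 0 P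
    let Vtil : Matrix (Fin n ⊕ Fin n) (Fin n ⊕ Fin n) ℝ := Matrix.fromCols Vbig 0
    ∀ i j : Fin n,
      ((expEntry (Qbig * Pbig) - onesMat (Fin n ⊕ Fin n) (Fin n ⊕ Fin n)) * Vtil)
          (Sum.inl j) (Sum.inl i) > 0 →
      (if ∃ (l k : Fin n ⊕ Fin n), Mbig j l = 1 ∧ Pbig l k = 1 ∧ Vbig k i = 1
        then (1 : ℝ) else 0) = 1 := by
  intro Mbig Vbig Qbig Pbig Vtil i j hpos
  have hMbig : Mbig.IsZeroOne := Matrix.IsZeroOne.fromCols hM (Matrix.IsZeroOne.one_sub hM)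
  have hPbig : Pbig.IsZeroOne :=
    .fromBlocks hP01 Matrix.isZeroOne_zero Matrix.isZeroOne_zero hP01
  have hVbig : Vbig.IsZeroOne := .fromRows hV Matrix.isZeroOne_zero
  rw [expEntry_sub_onesMat_mul_fromCols_zero_apply] at hpos
  obtain ⟨k, hexp, hVk⟩ :=
    Finset.exists_pos_and_eq_one_of_sum_mul_pos (fun k => hVbig k i) hpos
  have hMP : 0 < ∑ l, Mbig j l * Pbig l k := by
    simpa [Qbig, Matrix.fromRows_mul, Matrix.mul_apply, Real.one_lt_exp_iff] using hexp
  obtain ⟨l, hMl, hPl⟩ :=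
    Finset.exists_pos_and_eq_one_of_sum_mul_pos (fun l => hPbig l k) hMP
  have hMl : Mbig j l = 1 := (hMbig j l).resolve_left hMl.ne'
  rw [if_pos ⟨l, k, hMl, hPl, hVk⟩]

theorem block_positive_entry_implies_boolProd_one (n : ℕ)
    (M P V : Matrix (Fin n) (Fin n) ℝ)
    (hM : ∀ a b, M a b = 0 ∨ M a b = 1)
    (hP01 : ∀ a b, P a b = 0 ∨ P a b = 1)
    (hPdiag : ∀ a b, a ≠ b → P a b = 0)
    (hV : ∀ a b, V a b = 0 ∨ V a b = 1) :
    -- 𝖬 = [M M̄], 𝖵 = [V; 0], Q̃ = [𝖬; 0], K̃ᵀ = 𝖯 = diag(P,P), Ṽ = [𝖵 0]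
    let Mbig : Matrix (Fin n) (Fin n ⊕ Fin n) ℝ :=
      Matrix.fromCols M (Matrix.of fun a b => 1 - M a b)
    let Vbig : Matrix (Fin n ⊕ Fin n) (Fin n) ℝ := Matrix.fromRows V 0
    let Qbig : Matrix (Fin n ⊕ Fin n) (Fin n ⊕ Fin n) ℝ := Matrix.fromRows Mbig 0
    let Pbig : Matrix (Fin n ⊕ Fin n) (Fin n ⊕ Fin n) ℝ := Matrix.fromBlocks P 0 0 P
    let Vtil : Matrix (Fin n ⊕ Fin n) (Fin n ⊕ Fin n) ℝ := Matrix.fromCols Vbig 0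
    ∀ i j : Fin n,
      ((expEntry (Qbig * Pbig) - onesMat (Fin n ⊕ Fin n) (Fin n ⊕ Fin n)) * Vtil)
          (Sum.inl j) (Sum.inl i) > 0 →
      (if ∃ (l k : Fin n ⊕ Fin n), Mbig j l = 1 ∧ Pbig l k = 1 ∧ Vbig k i = 1
        then (1 : ℝ) else 0) = 1 :=
  block_positive_entry_implies_boolProd_one_general n M P V hM hP01 hV
end

section
/- Let M, P, V ∈ {0,1}^{n×n} with P diagonal. With the block constructions 𝖬 = [M M̄], 𝖵 = [V; 0], Q̃ = [𝖬; 0], K̃^T = diag(P,P), Ṽ = [𝖵 0]: if ((exp_entrywise(Q̃ K̃^T) − 1_{2n×2n}) Ṽ)_{j,i} = 0 for i, j ∈ [n], then the boolean semiring product (𝖬 𝖯 𝖵)_{j,i} = 0 where 𝖯 = diag(P,P). -/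
open scoped Classical

/-!
Since `exp x - 1 ≥ 0` with equality only at `x = 0`, for entrywise nonnegative `A, B, C` the
entry `((exp(A B) - 1) C)_{j i}` is a sum of nonnegative terms `(exp((A B)_{j k}) - 1) C_{k i}`,
and it vanishes only if every path `j → l → k → i` has a zero weight `A_{j l} B_{l k} C_{k i}`.
Applied to the blocks `𝖬, 𝖯, 𝖵` (nonnegative because `M` is `0/1`-valued, so `M̄ = 1 - M ≥ 0`),
a path of ones would have weight `1`.
-/

section

variable {m l n p : Type*} [Fintype l]

theorem le_mul_apply_of_nonneg {A : Matrix m l ℝ} {B : Matrix l n ℝ}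
    (hA : ∀ a b, 0 ≤ A a b) (hB : ∀ a b, 0 ≤ B a b) (j : m) (c : l) (k : n) :
    A j c * B c k ≤ (A * B) j k :=
  Finset.single_le_sum (f := fun c => A j c * B c k)
    (fun c _ => mul_nonneg (hA j c) (hB c k)) (Finset.mem_univ c)

theorem mul_apply_mul_eq_zero_of_expEntry_sub_onesMat_mul_apply_eq_zero
    [Fintype n] {A : Matrix m l ℝ} {B : Matrix l n ℝ} {C : Matrix n p ℝ}
    (hA : ∀ a b, 0 ≤ A a b) (hB : ∀ a b, 0 ≤ B a b) (hC : ∀ a b, 0 ≤ C a b) {j : m} {i : p}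
    (h : ((expEntry (A * B) - onesMat m n) * C) j i = 0) (c : l) (k : n) :
    A j c * B c k * C k i = 0 := by
  have hAB : ∀ k, 0 ≤ (A * B) j k := fun k =>
    Finset.sum_nonneg fun b _ => mul_nonneg (hA j b) (hB b k)
  have hterm : ∀ k ∈ Finset.univ, 0 ≤ (Real.exp ((A * B) j k) - 1) * C k i := fun k _ =>
    mul_nonneg (sub_nonneg.2 (Real.one_le_exp (hAB k))) (hC k i)
  have hsum : ∑ k, (Real.exp ((A * B) j k) - 1) * C k i = 0 := by
    simpa [Matrix.mul_apply, expEntry, onesMat] using h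
  rcases mul_eq_zero.1 ((Finset.sum_eq_zero_iff_of_nonneg hterm).1 hsum k (Finset.mem_univ k))
    with hexp | hCki
  · have hABjk : (A * B) j k = 0 := Real.exp_eq_one_iff _ |>.1 (sub_eq_zero.1 hexp)
    have hpath : A j c * B c k = 0 :=
      le_antisymm (hABjk ▸ le_mul_apply_of_nonneg hA hB j c k) (mul_nonneg (hA j c) (hB c k))
    rw [hpath, zero_mul]
  · rw [hCki, mul_zero]

theorem expEntry_fromRows_sub_onesMat_mul_fromCols_apply_inl [Fintype n] {m' p' : Type*}
    (A : Matrix m n ℝ) (A' : Matrix m' n ℝ) (B : Matrix n p ℝ) (B' : Matrix n p' ℝ)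
    (j : m) (i : p) :
    ((expEntry (Matrix.fromRows A A') - onesMat (m ⊕ m') n) * Matrix.fromCols B B')
        (Sum.inl j) (Sum.inl i) = ((expEntry A - onesMat m n) * B) j i := by
  simp [Matrix.mul_apply, expEntry, onesMat]

end

theorem block_zero_entry_implies_boolProd_zero_general (n : ℕ)
    (M P V : Matrix (Fin n) (Fin n) ℝ)
    (hM : ∀ a b, M a b = 0 ∨ M a b = 1)
    (hP01 : ∀ a b, P a b = 0 ∨ P a b = 1)
    (hV : ∀ a b, V a b = 0 ∨ V a b = 1) :
    -- 𝖬 = [M M̄], 𝖵 = [V; 0], Q̃ = [𝖬; 0], K̃ᵀ = 𝖯 = diag(P,P), Ṽ = [𝖵 0]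
    let Mbig : Matrix (Fin n) (Fin n ⊕ Fin n) ℝ :=
      Matrix.fromCols M (Matrix.of fun a b => 1 - M a b)
    let Vbig : Matrix (Fin n ⊕ Fin n) (Fin n) ℝ := Matrix.fromRows V 0
    let Qbig : Matrix (Fin n ⊕ Fin n) (Fin n ⊕ Fin n) ℝ := Matrix.fromRows Mbig 0
    let Pbig : Matrix (Fin n ⊕ Fin n) (Fin n ⊕ Fin n) ℝ := Matrix.fromBlocks P 0 0 P
    let Vtil : Matrix (Fin n ⊕ Fin n) (Fin n ⊕ Fin n) ℝ := Matrix.fromCols Vbig 0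
    ∀ i j : Fin n,
      ((expEntry (Qbig * Pbig) - onesMat (Fin n ⊕ Fin n) (Fin n ⊕ Fin n)) * Vtil)
          (Sum.inl j) (Sum.inl i) = 0 →
      (if ∃ (l k : Fin n ⊕ Fin n), Mbig j l = 1 ∧ Pbig l k = 1 ∧ Vbig k i = 1
        then (1 : ℝ) else 0) = 0 := by
  intro Mbig Vbig Qbig Pbig Vtil i j h
  have h01 : ∀ x : ℝ, x = 0 ∨ x = 1 → 0 ≤ x := by rintro x (rfl | rfl) <;> norm_num
  have hMbig : ∀ a b, 0 ≤ Mbig a b := by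
    rintro a (b | b)
    · exact h01 _ (hM a b)
    · rcases hM a b with hab | hab <;> simp [Mbig, hab]
  have hPbig : ∀ a b, 0 ≤ Pbig a b := by
    rintro (a | a) (b | b) <;> simp [Pbig, h01 _ (hP01 a b)]
  have hVbig : ∀ a b, 0 ≤ Vbig a b := by
    rintro (a | a) b <;> simp [Vbig, h01 _ (hV a b)]
  rw [Matrix.fromRows_mul, Matrix.zero_mul,
    expEntry_fromRows_sub_onesMat_mul_fromCols_apply_inl] at h
  rw [if_neg]
  rintro ⟨l, k, hjl, hlk, hki⟩
  have hpath := mul_apply_mul_eq_zero_of_expEntry_sub_onesMat_mul_apply_eq_zero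
    hMbig hPbig hVbig h l k
  rw [hjl, hlk, hki] at hpath
  norm_num at hpath

theorem block_zero_entry_implies_boolProd_zero (n : ℕ)
    (M P V : Matrix (Fin n) (Fin n) ℝ)
    (hM : ∀ a b, M a b = 0 ∨ M a b = 1)
    (hP01 : ∀ a b, P a b = 0 ∨ P a b = 1)
    (hPdiag : ∀ a b, a ≠ b → P a b = 0)
    (hV : ∀ a b, V a b = 0 ∨ V a b = 1) :
    -- 𝖬 = [M M̄], 𝖵 = [V; 0], Q̃ = [𝖬; 0], K̃ᵀ = 𝖯 = diag(P,P), Ṽ = [𝖵 0]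
    let Mbig : Matrix (Fin n) (Fin n ⊕ Fin n) ℝ :=
      Matrix.fromCols M (Matrix.of fun a b => 1 - M a b)
    let Vbig : Matrix (Fin n ⊕ Fin n) (Fin n) ℝ := Matrix.fromRows V 0
    let Qbig : Matrix (Fin n ⊕ Fin n) (Fin n ⊕ Fin n) ℝ := Matrix.fromRows Mbig 0
    let Pbig : Matrix (Fin n ⊕ Fin n) (Fin n ⊕ Fin n) ℝ := Matrix.fromBlocks P 0 0 P
    let Vtil : Matrix (Fin n ⊕ Fin n) (Fin n ⊕ Fin n) ℝ := Matrix.fromCols Vbig 0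
    ∀ i j : Fin n,
      ((expEntry (Qbig * Pbig) - onesMat (Fin n ⊕ Fin n) (Fin n ⊕ Fin n)) * Vtil)
          (Sum.inl j) (Sum.inl i) = 0 →
      (if ∃ (l k : Fin n ⊕ Fin n), Mbig j l = 1 ∧ Pbig l k = 1 ∧ Vbig k i = 1
        then (1 : ℝ) else 0) = 0 :=
  block_zero_entry_implies_boolProd_zero_general n M P V hM hP01 hV
end
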